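/- Let A be the 12×24 real matrix whose twelve rows, acting on w = (w_0,…,w_23) ∈ ℝ^24, compute w_1+w_7−w_13−w_19, w_1+w_3−w_17−w_19, w_5+w_7−w_13−w_15, w_8+w_10−w_20−w_22, w_0+w_2−w_0−w_6, w_2+w_17−w_11−w_16, w_20+w_22−w_21−w_21, w_6+w_15−w_11−w_16, w_12+w_14−w_12−w_18, w_5+w_14−w_4−w_23, w_8+w_10−w_9−w_9, and w_3+w_18−w_4−w_23. Then A has full row rank 12, A𝟙 = 0 for the all-ones vector 𝟙, and for every b ∈ ℝ^12 there exists w ∈ ℝ^24 with A w = b and w_i ≥ 0 for all i. -/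
import Mathlib


/-- The length-equalization system matrix for the genus-2 (2-corner region) cutgraph pattern. -/
def Amat : Matrix (Fin 12) (Fin 24) ℝ :=
  Matrix.of ![![0,1,0,0,0,0,0,1,0,0,0,0,0,-1,0,0,0,0,0,-1,0,0,0,0],
    ![0,1,0,1,0,0,0,0,0,0,0,0,0,0,0,0,0,-1,0,-1,0,0,0,0],
    ![0,0,0,0,0,1,0,1,0,0,0,0,0,-1,0,-1,0,0,0,0,0,0,0,0],
    ![0,0,0,0,0,0,0,0,1,0,1,0,0,0,0,0,0,0,0,0,-1,0,-1,0],
    ![0,0,1,0,0,0,-1,0,0,0,0,0,0,0,0,0,0,0,0,0,0,0,0,0],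
    ![0,0,1,0,0,0,0,0,0,0,0,-1,0,0,0,0,-1,1,0,0,0,0,0,0],
    ![0,0,0,0,0,0,0,0,0,0,0,0,0,0,0,0,0,0,0,0,1,-2,1,0],
    ![0,0,0,0,0,0,1,0,0,0,0,-1,0,0,0,1,-1,0,0,0,0,0,0,0],
    ![0,0,0,0,0,0,0,0,0,0,0,0,0,0,1,0,0,0,-1,0,0,0,0,0],
    ![0,0,0,0,-1,1,0,0,0,0,0,0,0,0,1,0,0,0,0,0,0,0,0,-1],
    ![0,0,0,0,0,0,0,0,1,-2,1,0,0,0,0,0,0,0,0,0,0,0,0,0],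
    ![0,0,0,1,-1,0,0,0,0,0,0,0,0,0,0,0,0,0,1,0,0,0,0,-1]]

noncomputable def Bmat : Matrix (Fin 24) (Fin 12) ℝ :=
 Matrix.of ![
  ![0,0,0,0,0,0,0,0,0,0,0,0],
  ![(1/4),(1/4),(-1/4),0,(-1/4),(1/4),0,(-1/4),(-1/4),(1/4),0,(-1/4)],
  ![(-1/20),(1/20),(1/20),0,(1/2),(11/120),0,(11/120),0,(-1/120),0,(-1/120)],
  ![(-1/4),(1/4),(1/4),0,0,(1/24),0,(1/24),(1/2),(-11/24),0,(13/24)],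
  ![(-1/10),(1/10),(1/10),0,0,(1/60),0,(1/60),0,(-11/60),0,(-11/60)],
  ![(-1/4),(1/4),(1/4),0,0,(1/24),0,(1/24),(-1/2),(13/24),0,(-11/24)],
  ![(-1/20),(1/20),(1/20),0,(-1/2),(11/120),0,(11/120),0,(-1/120),0,(-1/120)],
  ![(1/4),(-1/4),(1/4),0,(1/4),(-1/4),0,(1/4),(1/4),(-1/4),0,(1/4)],
  ![0,0,0,(1/4),0,0,(1/12),0,0,0,(1/12),0],
  ![0,0,0,(1/4),0,0,(1/12),0,0,0,(-5/12),0],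
  ![0,0,0,(1/4),0,0,(1/12),0,0,0,(1/12),0],
  ![(1/10),(-1/10),(-1/10),0,0,(-11/60),0,(-11/60),0,(1/60),0,(1/60)],
  ![0,0,0,0,0,0,0,0,0,0,0,0],
  ![(-1/4),(1/4),(-1/4),0,(-1/4),(1/4),0,(-1/4),(-1/4),(1/4),0,(-1/4)],
  ![(1/20),(-1/20),(-1/20),0,0,(-1/120),0,(-1/120),(1/2),(11/120),0,(11/120)],
  ![(1/4),(-1/4),(-1/4),0,(1/2),(-11/24),0,(13/24),0,(1/24),0,(1/24)],
  ![(1/10),(-1/10),(-1/10),0,0,(-11/60),0,(-11/60),0,(1/60),0,(1/60)],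
  ![(1/4),(-1/4),(-1/4),0,(-1/2),(13/24),0,(-11/24),0,(1/24),0,(1/24)],
  ![(1/20),(-1/20),(-1/20),0,0,(-1/120),0,(-1/120),(-1/2),(11/120),0,(11/120)],
  ![(-1/4),(-1/4),(1/4),0,(1/4),(-1/4),0,(1/4),(1/4),(-1/4),0,(1/4)],
  ![0,0,0,(-1/4),0,0,(1/12),0,0,0,(1/12),0],
  ![0,0,0,(-1/4),0,0,(-5/12),0,0,0,(1/12),0],
  ![0,0,0,(-1/4),0,0,(1/12),0,0,0,(1/12),0],
  ![(-1/10),(1/10),(1/10),0,0,(1/60),0,(1/60),0,(-11/60),0,(-11/60)]]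

set_option maxHeartbeats 4000000 in
lemma hAB : Amat * Bmat = 1 := by
  ext i j
  fin_cases i <;> fin_cases j <;>
    norm_num [Amat, Bmat, Matrix.mul_apply, Fin.sum_univ_succ, Matrix.one_apply, Fin.ext_iff]

set_option maxHeartbeats 1000000 in
/-- The matrix has full row rank 12, the all-ones vector lies in its kernel, and
the system `A w = b` has a non-negative solution for every right-hand side `b`. -/
theorem equalizable :
    Amat.rank = 12 ∧ Amat.mulVec (fun _ => 1) = 0 ∧
    ∀ b : Fin 12 → ℝ, ∃ w : Fin 24 → ℝ, Amat.mulVec w = b ∧ ∀ i, 0 ≤ w i := by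
  have hAB := hAB
  have h1 : Amat.mulVec (fun _ => 1) = 0 := by
    ext i
    fin_cases i <;>
      norm_num [Amat, Matrix.mulVec, dotProduct, Fin.sum_univ_succ]
  refine ⟨?_, h1, ?_⟩
  · refine le_antisymm ?_ ?_
    · simpa using Amat.rank_le_card_height
    · calc (12 : ℕ) = (1 : Matrix (Fin 12) (Fin 12) ℝ).rank := by simp
        _ = (Amat * Bmat).rank := by rw [hAB]
        _ ≤ Amat.rank := Matrix.rank_mul_le_left _ _
  · intro b
    set x := Bmat.mulVec b with hx
    set c := ∑ i, |x i| with hc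
    refine ⟨fun i => x i + c, ?_, ?_⟩
    · have : (fun i => x i + c) = x + c • (fun _ => (1:ℝ)) := by
        funext i; simp [mul_comm]
      rw [this, Matrix.mulVec_add, Matrix.mulVec_smul, h1, hx,
        Matrix.mulVec_mulVec, hAB]
      simp
    · intro i
      have h1 : |x i| ≤ c := by
        rw [hc]
        exact Finset.single_le_sum (fun j _ => abs_nonneg (x j)) (Finset.mem_univ i)
      have h2 := neg_abs_le (x i)
      show 0 ≤ x i + c
      linarith
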